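/- Let Φ be a complete fan and σ a maximal cone of the singular subfan Φˢ (the minimal subfan containing all deficient cones). Then every cone τ ∈ St(σ) has the form τ = σ + ρ₁ + ... + ρ_s with s = dim(τ) − dim(σ), where each ρᵢ is a free edge of τ. -/

import Mathlib

open Set

variable {V : Type} [AddCommGroup V] [Module ℝ V]

/-- A polyhedral cone: a finite intersection of closed halfspaces `{L ≥ 0}`. -/
def IsPolyCone (σ : Set V) : Prop :=
  ∃ S : Finset (V →ₗ[ℝ] ℝ), σ = {v | ∀ L ∈ S, 0 ≤ L v}

/-- `τ` is a face of the cone `σ`. -/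
def IsFaceOf (τ σ : Set V) : Prop :=
  ∃ L : V →ₗ[ℝ] ℝ, (∀ v ∈ σ, 0 ≤ L v) ∧ τ = {v ∈ σ | L v = 0}

/-- The dimension of a cone: the dimension of its linear span. -/
noncomputable def coneDim (σ : Set V) : ℕ :=
  Module.finrank ℝ (Submodule.span ℝ σ)

/-- A fan: a finite collection of polyhedral cones, closed under taking faces, such
that the intersection of two cones is a face of each, containing the zero cone. -/
structure Fan (V : Type) [AddCommGroup V] [Module ℝ V] where
  cones : Finset (Set V)
  poly : ∀ σ ∈ cones, IsPolyCone σ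
  face_mem : ∀ σ ∈ cones, ∀ τ : Set V, IsFaceOf τ σ → τ ∈ cones
  inter_face : ∀ σ ∈ cones, ∀ τ ∈ cones, IsFaceOf (σ ∩ τ) σ
  zero_mem : ({0} : Set V) ∈ cones

/-- The support of a fan. -/
def Fan.support (Φ : Fan V) : Set V := ⋃ σ ∈ Φ.cones, σ

/-- A fan is complete if its support is all of `V`. -/
def Fan.IsComplete (Φ : Fan V) : Prop := Φ.support = univ

/-- A cone is simplicial if it is the convex hull of `coneDim σ` many rays spanned
by linearly independent vectors. -/
def IsSimplicialCone (σ : Set V) : Prop :=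
  ∃ f : Fin (coneDim σ) → V, LinearIndependent ℝ f ∧
    σ = {v | ∃ c : Fin (coneDim σ) → ℝ, (∀ i, 0 ≤ c i) ∧ v = ∑ i, c i • f i}

def Fan.IsSimplicial (Φ : Fan V) : Prop := ∀ σ ∈ Φ.cones, IsSimplicialCone σ

/-- An edge of a cone: a 1-dimensional face. -/
def IsEdge (ρ σ : Set V) : Prop := IsFaceOf ρ σ ∧ coneDim ρ = 1

/-- Minkowski sum of two subsets. -/
def setAdd (σ τ : Set V) : Set V := {x | ∃ a ∈ σ, ∃ b ∈ τ, x = a + b}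

/-- An edge `ρ` of `σ` is free if all other edges of `σ` are contained in one facet
`τ`, and `σ = τ + ρ`. -/
def IsFreeEdge (ρ σ : Set V) : Prop :=
  IsEdge ρ σ ∧ ∃ τ : Set V, IsFaceOf τ σ ∧ coneDim τ = coneDim σ - 1 ∧
    (∀ ρ' : Set V, IsEdge ρ' σ → ρ' ≠ ρ → ρ' ⊆ τ) ∧ σ = setAdd τ ρ

/-- A cone is deficient if it has no free edge. -/
def IsDeficient (σ : Set V) : Prop := ¬ ∃ ρ : Set V, IsFreeEdge ρ σ

/-- The singular subfan `Φˢ`: the (cones of the) minimal subfan of `Φ` containing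
all deficient cones of `Φ`. -/
def Fan.singular (Φ : Fan V) : Set (Set V) :=
  {σ | σ ∈ Φ.cones ∧ ∃ τ ∈ Φ.cones, IsDeficient τ ∧ IsFaceOf σ τ}

/-- The star of a cone `σ` in the fan `Φ`. -/
def Fan.star (Φ : Fan V) (σ : Set V) : Set (Set V) := {τ | τ ∈ Φ.cones ∧ σ ⊆ τ}

/-- `[St(σ)]`: the minimal subfan containing the star of `σ`. -/
def Fan.closedStar (Φ : Fan V) (σ : Set V) : Set (Set V) :=
  {ξ | ∃ τ ∈ Φ.star σ, IsFaceOf ξ τ}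

/-- `∂St(σ)`. -/
def Fan.boundaryStar (Φ : Fan V) (σ : Set V) : Set (Set V) :=
  Φ.closedStar σ \ Φ.star σ

/-- The link of a cone. -/
def Fan.link (Φ : Fan V) (σ : Set V) : Set (Set V) :=
  {τ | τ ∈ Φ.boundaryStar σ ∧ τ ∩ σ = {0}}

/-- The relative interior `σ⁰` of a cone: the complement of its proper faces. -/
def coneInt (σ : Set V) : Set V :=
  σ \ ⋃ τ ∈ {τ : Set V | IsFaceOf τ σ ∧ τ ≠ σ}, τ

/-- `l` is piecewise linear with respect to `Φ`. -/
def IsPWLinear (Φ : Fan V) (l : V → ℝ) : Prop :=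
  ∀ σ ∈ Φ.cones, ∃ L : V →ₗ[ℝ] ℝ, ∀ v ∈ σ, l v = L v

/-- `l` is strictly convex on the complete fan `Φ`: for any two distinct
top-dimensional cones `σ, τ` the linear function agreeing with `l` on `σ` is
strictly smaller than `l` on the interior of `τ`. -/
def IsStrictlyConvex (Φ : Fan V) (l : V → ℝ) : Prop :=
  IsPWLinear Φ l ∧
  ∀ σ ∈ Φ.cones, coneDim σ = Module.finrank ℝ V →
    ∀ L : V →ₗ[ℝ] ℝ, (∀ v ∈ σ, l v = L v) →
      ∀ τ ∈ Φ.cones, coneDim τ = Module.finrank ℝ V → τ ≠ σ →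
        ∀ v ∈ coneInt τ, L v < l v

/-!
Maximality of `σ` in `Φˢ` forces `σ` itself to be deficient and every cone of `Φ` strictly
containing `σ` to have a free edge. If `ρ` is a free edge of `τ ⊋ σ` with complementary facet `ξ`,
so that `τ = ξ + ρ`, then `σ ⊆ ξ`: otherwise `ρ` would be a free edge of `σ`, with complementary
facet `σ ∩ ξ`. A free edge `ρ'` of `ξ`, with complementary facet `ζ`, stays free in `τ`, with
complementary facet `ζ + ρ`. Induction on `dim τ` then peels off one free edge at a time.
-/

open scoped Pointwise

open Submodule (span span_le span_mono subset_span)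

theorem setAdd_eq_add {G : Type} [AddCommGroup G] (A B : Set G) : setAdd A B = A + B := by
  ext x
  simp [setAdd, Set.mem_add, eq_comm]

theorem mem_add_fintype_sum {G ι : Type*} [AddCommMonoid G] [Fintype ι] (s : Set G)
    (t : ι → Set G) {x : G} :
    x ∈ s + ∑ i, t i ↔ ∃ a ∈ s, ∃ c : ι → G, (∀ i, c i ∈ t i) ∧ x = a + ∑ i, c i := by
  simp only [Set.mem_add, Set.mem_fintype_sum]
  constructor
  · rintro ⟨a, ha, _, ⟨c, hc, rfl⟩, rfl⟩
    exact ⟨a, ha, c, hc, rfl⟩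
  · rintro ⟨a, ha, c, hc, rfl⟩
    exact ⟨a, ha, _, ⟨c, hc, rfl⟩, rfl⟩

section Cones

variable {σ τ ξ ρ A B : Set V}

namespace IsPolyCone

theorem zero_mem (h : IsPolyCone σ) : (0 : V) ∈ σ := by
  obtain ⟨S, rfl⟩ := h
  simp

theorem add_mem (h : IsPolyCone σ) {x y : V} (hx : x ∈ σ) (hy : y ∈ σ) : x + y ∈ σ := by
  obtain ⟨S, rfl⟩ := h
  intro L hL
  rw [map_add]
  exact add_nonneg (hx L hL) (hy L hL)

theorem smul_mem (h : IsPolyCone σ) {c : ℝ} (hc : 0 ≤ c) {x : V} (hx : x ∈ σ) : c • x ∈ σ := by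
  obtain ⟨S, rfl⟩ := h
  intro L hL
  rw [map_smul, smul_eq_mul]
  exact mul_nonneg hc (hx L hL)

theorem add_subset (h : IsPolyCone σ) (hA : A ⊆ σ) (hB : B ⊆ σ) : A + B ⊆ σ := by
  rintro _ ⟨a, ha, b, hb, rfl⟩
  exact h.add_mem (hA ha) (hB hb)

end IsPolyCone

namespace IsFaceOf

theorem subset (h : IsFaceOf σ τ) : σ ⊆ τ := by
  obtain ⟨L, -, rfl⟩ := h
  exact fun v hv => hv.1

protected theorem refl (σ : Set V) : IsFaceOf σ σ :=
  ⟨0, fun _ _ => le_rfl, by simp⟩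

theorem isPolyCone (h : IsFaceOf σ τ) (hτ : IsPolyCone τ) : IsPolyCone σ := by
  classical
  obtain ⟨L, hL, rfl⟩ := h
  obtain ⟨S, rfl⟩ := hτ
  refine ⟨insert (-L) S, Set.ext fun v => ?_⟩
  simp only [Set.mem_ofPred_eq, Finset.mem_insert, forall_eq_or_imp, LinearMap.neg_apply,
    neg_nonneg]
  exact ⟨fun hv => ⟨hv.2.le, hv.1⟩, fun hv => ⟨hv.2, le_antisymm hv.1 (hL v hv.2)⟩⟩

theorem inter (h : IsFaceOf ξ τ) (hσ : σ ⊆ τ) : IsFaceOf (σ ∩ ξ) σ := by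
  obtain ⟨L, hL, rfl⟩ := h
  refine ⟨L, fun v hv => hL v (hσ hv), Set.ext fun v => ?_⟩
  simp only [Set.mem_inter_iff, Set.mem_ofPred_eq]
  exact ⟨fun hv => ⟨hv.1, hv.2.2⟩, fun hv => ⟨hv.1, hσ hv.1, hv.2⟩⟩

theorem of_subset (h : IsFaceOf ρ τ) (hρσ : ρ ⊆ σ) (hστ : σ ⊆ τ) : IsFaceOf ρ σ := by
  simpa [Set.inter_eq_right.mpr hρσ] using h.inter hστ

theorem mem_of_add_mem (h : IsFaceOf σ τ) {x y : V} (hx : x ∈ τ) (hy : y ∈ τ)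
    (hxy : x + y ∈ σ) : x ∈ σ ∧ y ∈ σ := by
  obtain ⟨L, hL, rfl⟩ := h
  have hsum : L x + L y = 0 := by rw [← map_add]; exact hxy.2
  have hLx := hL x hx
  have hLy := hL y hy
  exact ⟨⟨hx, by linarith⟩, ⟨hy, by linarith⟩⟩

theorem eq_inter_add (h : IsFaceOf σ τ) (hσ : IsPolyCone σ) (hτ : τ = ξ + ρ) (hξ : ξ ⊆ τ)
    (hρ : ρ ⊆ σ) : σ = σ ∩ ξ + ρ := by
  refine Set.Subset.antisymm (fun v hv => ?_) (hσ.add_subset Set.inter_subset_left hρ)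
  obtain ⟨a, ha, b, hb, rfl⟩ := hτ ▸ h.subset hv
  exact ⟨a, ⟨(h.mem_of_add_mem (hξ ha) (h.subset (hρ hb)) hv).1, ha⟩, b, hb, rfl⟩

end IsFaceOf

end Cones

theorem span_add_le_sup (A B : Set V) : span ℝ (A + B) ≤ span ℝ A ⊔ span ℝ B :=
  span_le.2 <| by
    rintro _ ⟨a, ha, b, hb, rfl⟩
    exact Submodule.add_mem_sup (subset_span ha) (subset_span hb)

theorem span_add {A B : Set V} (hA : (0 : V) ∈ A) (hB : (0 : V) ∈ B) :
    span ℝ (A + B) = span ℝ A ⊔ span ℝ B :=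
  (span_add_le_sup A B).antisymm <|
    sup_le (span_mono (Set.subset_add_left A hB)) (span_mono (Set.subset_add_right B hA))

def ray (u : V) : Set V := {x | ∃ t : ℝ, 0 ≤ t ∧ x = t • u}

theorem zero_mem_ray (u : V) : (0 : V) ∈ ray u := ⟨0, le_rfl, (zero_smul ℝ u).symm⟩

theorem self_mem_ray (u : V) : u ∈ ray u := ⟨1, zero_le_one, (one_smul ℝ u).symm⟩

theorem IsPolyCone.ray_subset {σ : Set V} (h : IsPolyCone σ) {u : V} (hu : u ∈ σ) :
    ray u ⊆ σ := by
  rintro _ ⟨t, ht, rfl⟩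
  exact h.smul_mem ht hu

theorem span_ray (u : V) : span ℝ (ray u) = span ℝ {u} :=
  le_antisymm
    (span_le.2 <| by
      rintro _ ⟨t, -, rfl⟩
      exact Submodule.smul_mem _ t (Submodule.mem_span_singleton_self u))
    (span_mono (Set.singleton_subset_iff.2 (self_mem_ray u)))

theorem isFaceOf_add_ray {ξ : Set V} {u : V} (hu : u ∉ span ℝ ξ) :
    IsFaceOf ξ (ξ + ray u) := by
  obtain ⟨f, hfu, hf⟩ := Submodule.exists_dual_map_eq_bot_of_notMem hu inferInstance
  have hfξ : ∀ a ∈ ξ, f a = 0 := fun a ha =>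
    LinearMap.mem_ker.1 (LinearMap.le_ker_iff_map.2 hf (subset_span ha))
  have hL : ∀ a ∈ ξ, ∀ t : ℝ, ((f u)⁻¹ • f) (a + t • u) = t := fun a ha t => by
    simp [hfξ a ha, mul_left_comm _ t, inv_mul_cancel₀ hfu]
  refine ⟨(f u)⁻¹ • f, ?_, Set.ext fun v =>
    ⟨fun hv => ⟨Set.subset_add_left ξ (zero_mem_ray u) hv, ?_⟩, ?_⟩⟩
  · rintro _ ⟨a, ha, _, ⟨t, ht, rfl⟩, rfl⟩
    rwa [hL a ha t]
  · simpa using hL v hv 0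
  · rintro ⟨⟨a, ha, _, ⟨t, -, rfl⟩, rfl⟩, hv⟩
    rw [hL a ha t] at hv
    simpa [hv] using ha

theorem notMem_span_of_coneDim_lt {ξ : Set V} (hξ : (0 : V) ∈ ξ) {u : V}
    (h : coneDim ξ < coneDim (ξ + ray u)) : u ∉ span ℝ ξ := fun hu => by
  rw [coneDim, coneDim, span_add hξ (zero_mem_ray u), span_ray,
    sup_eq_left.2 ((Submodule.span_singleton_le_iff_mem _ _).2 hu)] at h
  exact lt_irrefl _ h

section Dimension

variable [FiniteDimensional ℝ V] {σ τ ξ : Set V}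

theorem coneDim_mono (h : σ ⊆ τ) : coneDim σ ≤ coneDim τ :=
  Submodule.finrank_mono (span_mono h)

theorem coneDim_add_le (A B : Set V) : coneDim (A + B) ≤ coneDim A + coneDim B :=
  (Submodule.finrank_mono (span_add_le_sup A B)).trans
    (Submodule.finrank_add_le_finrank_add_finrank _ _)

theorem coneDim_add_ray (hξ : (0 : V) ∈ ξ) {u : V} (hu : u ∉ span ℝ ξ) :
    coneDim (ξ + ray u) = coneDim ξ + 1 := by
  rw [coneDim, span_add hξ (zero_mem_ray u), span_ray, Submodule.finrank_sup_span_singleton hu]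
  rfl

theorem IsFaceOf.eq_of_coneDim_eq (h : IsFaceOf σ τ) (hd : coneDim σ = coneDim τ) : σ = τ := by
  obtain ⟨L, -, rfl⟩ := h
  have hspan := Submodule.eq_of_le_of_finrank_le (span_mono (Set.sep_subset τ _)) hd.ge
  have hker : span ℝ {v ∈ τ | L v = 0} ≤ LinearMap.ker L :=
    span_le.2 fun w hw => hw.2
  exact (Set.sep_subset _ _).antisymm fun v hv =>
    ⟨hv, hker (hspan ▸ subset_span hv)⟩

theorem exists_mem_span_eq_of_coneDim_eq_one {ρ : Set V} (h : coneDim ρ = 1) :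
    ∃ u ∈ ρ, span ℝ ρ = span ℝ {u} := by
  obtain ⟨u, hu, hu0⟩ : ∃ u ∈ ρ, u ≠ 0 := by
    by_contra! hρ
    rw [coneDim, Submodule.span_eq_bot.2 hρ, finrank_bot] at h
    exact zero_ne_one h
  refine ⟨u, hu, (Submodule.eq_of_le_of_finrank_le ?_ ?_).symm⟩
  · exact span_mono (Set.singleton_subset_iff.2 hu)
  · rw [finrank_span_singleton hu0]
    exact h.le

end Dimension

structure IsFreeEdgeWithFacet (ρ ξ τ : Set V) : Prop where
  isEdge : IsEdge ρ τ
  isFaceOf : IsFaceOf ξ τ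
  coneDim_eq : coneDim ξ = coneDim τ - 1
  subset_of_isEdge : ∀ ρ' : Set V, IsEdge ρ' τ → ρ' ≠ ρ → ρ' ⊆ ξ
  eq_add : τ = ξ + ρ

theorem isFreeEdge_iff {ρ τ : Set V} : IsFreeEdge ρ τ ↔ ∃ ξ, IsFreeEdgeWithFacet ρ ξ τ := by
  simp only [IsFreeEdge, setAdd_eq_add]
  exact ⟨fun ⟨hρ, ξ, hξ, hd, he, hτ⟩ => ⟨ξ, hρ, hξ, hd, he, hτ⟩,
    fun ⟨ξ, hρ, hξ, hd, he, hτ⟩ => ⟨hρ, ξ, hξ, hd, he, hτ⟩⟩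

namespace IsFreeEdgeWithFacet

variable [FiniteDimensional ℝ V] {ρ ξ τ σ : Set V}

theorem coneDim_lt (h : IsFreeEdgeWithFacet ρ ξ τ) : coneDim ξ < coneDim τ := by
  have := h.isEdge.2 ▸ coneDim_mono h.isEdge.1.subset
  have := h.coneDim_eq
  omega

theorem exists_eq_ray (h : IsFreeEdgeWithFacet ρ ξ τ) (hτ : IsPolyCone τ) :
    ∃ u, u ∉ span ℝ ξ ∧ ρ = ray u := by
  obtain ⟨u, huρ, hspan⟩ := exists_mem_span_eq_of_coneDim_eq_one h.isEdge.2
  have huτ := h.isEdge.1.subset huρ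
  have hu : u ∉ span ℝ ξ := fun hu => by
    have hρξ : span ℝ ρ ≤ span ℝ ξ := by
      rwa [hspan, Submodule.span_singleton_le_iff_mem]
    have hτξ : span ℝ τ ≤ span ℝ ξ := by
      rw [h.eq_add]
      exact (span_add_le_sup ξ ρ).trans (sup_le le_rfl hρξ)
    exact (Submodule.finrank_mono hτξ).not_gt h.coneDim_lt
  obtain ⟨L, hL, hξ⟩ := h.isFaceOf
  have hLu : 0 < L u := (hL u huτ).lt_of_ne fun hLu =>
    hu (subset_span (hξ ▸ ⟨huτ, hLu.symm⟩))
  refine ⟨u, hu, Set.Subset.antisymm (fun x hx => ?_)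
    ((h.isEdge.1.isPolyCone hτ).ray_subset huρ)⟩
  obtain ⟨c, rfl⟩ := Submodule.mem_span_singleton.1 (hspan ▸ subset_span hx)
  have hc := hL _ (h.isEdge.1.subset hx)
  rw [map_smul, smul_eq_mul] at hc
  exact ⟨c, nonneg_of_mul_nonneg_left hc hLu, rfl⟩

theorem isFreeEdge_of_isFreeEdge_facet (h : IsFreeEdgeWithFacet ρ ξ τ) (hτ : IsPolyCone τ)
    {ρ' : Set V} (hρ' : IsFreeEdge ρ' ξ) (hρ'τ : IsFaceOf ρ' τ) : IsFreeEdge ρ' τ := by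
  obtain ⟨ζ, hζ⟩ := isFreeEdge_iff.1 hρ'
  have hξ := h.isFaceOf.isPolyCone hτ
  obtain ⟨u', hu', rfl⟩ := hζ.exists_eq_ray hξ
  have hτθ : τ = ζ + ρ + ray u' := by rw [h.eq_add, hζ.eq_add, add_right_comm]
  have hζc := hζ.isFaceOf.isPolyCone hξ
  have hρc := h.isEdge.1.isPolyCone hτ
  have h0θ : (0 : V) ∈ ζ + ρ := ⟨0, hζc.zero_mem, 0, hρc.zero_mem, add_zero 0⟩
  have hθdim : coneDim (ζ + ρ) < coneDim τ :=
    calc coneDim (ζ + ρ) ≤ coneDim ζ + coneDim ρ := coneDim_add_le ζ ρ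
      _ = coneDim ζ + 1 := by rw [h.isEdge.2]
      _ < coneDim ξ + 1 := Nat.add_lt_add_right hζ.coneDim_lt 1
      _ = coneDim τ := by have := h.coneDim_lt; have := h.coneDim_eq; omega
  have hu'θ : u' ∉ span ℝ (ζ + ρ) := notMem_span_of_coneDim_lt h0θ (hτθ ▸ hθdim)
  refine isFreeEdge_iff.2 ⟨ζ + ρ, ⟨hρ'τ, hζ.isEdge.2⟩, hτθ ▸ isFaceOf_add_ray hu'θ, ?_, ?_, hτθ⟩
  · have := coneDim_add_ray h0θ hu'θ
    rw [← hτθ] at this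
    omega
  · intro e he hne
    by_cases heρ : e = ρ
    · exact heρ ▸ Set.subset_add_right ρ hζc.zero_mem
    · have heξ := h.subset_of_isEdge e he heρ
      have heζ := hζ.subset_of_isEdge e ⟨he.1.of_subset heξ h.isFaceOf.subset, he.2⟩ hne
      exact heζ.trans (Set.subset_add_left ζ hρc.zero_mem)

theorem isFreeEdge_of_not_subset (h : IsFreeEdgeWithFacet ρ ξ τ) (hτ : IsPolyCone τ)
    (hσ : IsFaceOf σ τ) (hedge : ∀ e, IsEdge e σ → IsFaceOf e τ) (hσξ : ¬σ ⊆ ξ) :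
    IsFreeEdge ρ σ := by
  obtain ⟨u, hu, rfl⟩ := h.exists_eq_ray hτ
  have hσc := hσ.isPolyCone hτ
  have hξ := h.isFaceOf.isPolyCone hτ
  have hρσ : ray u ⊆ σ := by
    obtain ⟨x, hxσ, hxξ⟩ := Set.not_subset.1 hσξ
    obtain ⟨a, ha, _, ⟨t, ht, rfl⟩, rfl⟩ := h.eq_add ▸ hσ.subset hxσ
    have htu := (hσ.mem_of_add_mem (h.isFaceOf.subset ha) (h.isEdge.1.subset ⟨t, ht, rfl⟩)
      hxσ).2
    have ht0 : t ≠ 0 := by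
      rintro rfl
      exact hxξ (by simpa using ha)
    refine hσc.ray_subset ?_
    simpa [smul_smul, inv_mul_cancel₀ ht0] using hσc.smul_mem (inv_nonneg.2 ht) htu
  have hσeq := hσ.eq_inter_add hσc h.eq_add h.isFaceOf.subset hρσ
  have h0 : (0 : V) ∈ σ ∩ ξ := ⟨hσc.zero_mem, hξ.zero_mem⟩
  have hu' : u ∉ span ℝ (σ ∩ ξ) :=
    fun hu' => hu (span_mono Set.inter_subset_right hu')
  refine isFreeEdge_iff.2 ⟨σ ∩ ξ, ⟨h.isEdge.1.of_subset hρσ hσ.subset, h.isEdge.2⟩,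
    h.isFaceOf.inter hσ.subset, ?_, fun e he hne => ?_, hσeq⟩
  · have := coneDim_add_ray h0 hu'
    rw [← hσeq] at this
    omega
  · exact Set.subset_inter he.1.subset (h.subset_of_isEdge e ⟨hedge e he, he.2⟩ hne)

end IsFreeEdgeWithFacet

namespace Fan

variable {Φ : Fan V} {σ τ : Set V}

theorem isFaceOf_of_subset (hσ : σ ∈ Φ.cones) (hτ : τ ∈ Φ.cones) (h : σ ⊆ τ) :
    IsFaceOf σ τ := by
  simpa [Set.inter_eq_right.mpr h] using Φ.inter_face τ hτ σ hσ

variable [FiniteDimensional ℝ V]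

theorem subset_facet_of_isDeficient (hσ : σ ∈ Φ.cones) (hτ : τ ∈ Φ.cones) (hστ : σ ⊆ τ)
    (hdef : IsDeficient σ) {ρ ξ : Set V} (h : IsFreeEdgeWithFacet ρ ξ τ) : σ ⊆ ξ := by
  by_contra hσξ
  refine hdef ⟨ρ, h.isFreeEdge_of_not_subset (Φ.poly τ hτ) (isFaceOf_of_subset hσ hτ hστ)
    (fun e he => isFaceOf_of_subset (Φ.face_mem σ hσ e he.1) hτ (he.1.subset.trans hστ)) hσξ⟩

theorem exists_isFreeEdge_eq_add_sum (hσ : σ ∈ Φ.cones) (hdef : IsDeficient σ)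
    (hstar : ∀ τ ∈ Φ.star σ, τ ≠ σ → ¬IsDeficient τ) (hτ : τ ∈ Φ.star σ) :
    ∃ (s : ℕ) (ρ : Fin s → Set V), s = coneDim τ - coneDim σ ∧
      (∀ i, IsFreeEdge (ρ i) τ) ∧ τ = σ + ∑ i, ρ i := by
  induction hn : coneDim τ using Nat.strong_induction_on generalizing τ with
  | _ n ih =>
  by_cases hτσ : τ = σ
  · subst hτσ
    exact ⟨0, Fin.elim0, by omega, fun i => i.elim0, by simp⟩
  obtain ⟨ρ₁, hρ₁⟩ := not_not.1 (hstar τ hτ hτσ)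
  obtain ⟨ξ, hξ⟩ := isFreeEdge_iff.1 hρ₁
  have hσξ := subset_facet_of_isDeficient hσ hτ.1 hτ.2 hdef hξ
  have hξΦ := Φ.face_mem τ hτ.1 ξ hξ.isFaceOf
  obtain ⟨s, ρ, hs, hρ, hξeq⟩ := ih _ (hn ▸ hξ.coneDim_lt) ⟨hξΦ, hσξ⟩ rfl
  have hfree : ∀ i, IsFreeEdge (Fin.snoc (α := fun _ => Set V) ρ ρ₁ i) τ := by
    refine Fin.lastCases (by simpa using hρ₁) fun i => ?_
    simpa using hξ.isFreeEdge_of_isFreeEdge_facet (Φ.poly τ hτ.1) (hρ i)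
      (isFaceOf_of_subset (Φ.face_mem ξ hξΦ _ (hρ i).1.1) hτ.1
        ((hρ i).1.1.subset.trans hξ.isFaceOf.subset))
  refine ⟨s + 1, Fin.snoc ρ ρ₁, ?_, hfree, ?_⟩
  · have := coneDim_mono hσξ
    have := hξ.coneDim_lt
    have := hξ.coneDim_eq
    omega
  · rw [Fin.sum_univ_castSucc]
    simp only [Fin.snoc_castSucc, Fin.snoc_last]
    rw [← add_assoc, ← hξeq, hξ.eq_add]

end Fan

theorem star_of_maximal_singular_cone_general [FiniteDimensional ℝ V]
    (Φ : Fan V) (σ : Set V)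
    (hσ : σ ∈ Φ.singular) (hmax : ∀ τ ∈ Φ.singular, coneDim τ ≤ coneDim σ) :
    ∀ τ ∈ Φ.star σ,
      ∃ (s : ℕ) (ρ : Fin s → Set V),
        s = coneDim τ - coneDim σ ∧
        (∀ i, IsFreeEdge (ρ i) τ) ∧
        τ = {x | ∃ a ∈ σ, ∃ c : Fin s → V, (∀ i, c i ∈ ρ i) ∧ x = a + ∑ i, c i} := by
  obtain ⟨hσΦ, δ, hδΦ, hδ, hσδ⟩ := hσ
  have hsingular : ∀ τ ∈ Φ.cones, IsDeficient τ → τ ∈ Φ.singular :=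
    fun τ hτ hdef => ⟨hτ, τ, hτ, hdef, IsFaceOf.refl τ⟩
  have hσeq : σ = δ := hσδ.eq_of_coneDim_eq
    ((coneDim_mono hσδ.subset).antisymm (hmax δ (hsingular δ hδΦ hδ)))
  have hstar : ∀ τ ∈ Φ.star σ, τ ≠ σ → ¬IsDeficient τ := fun τ ⟨hτ, hστ⟩ hτσ hdef =>
    hτσ ((Fan.isFaceOf_of_subset hσΦ hτ hστ).eq_of_coneDim_eq
      ((coneDim_mono hστ).antisymm (hmax τ (hsingular τ hτ hdef)))).symm
  intro τ hτ
  obtain ⟨s, ρ, hs, hρ, hτeq⟩ := Fan.exists_isFreeEdge_eq_add_sum hσΦ (hσeq ▸ hδ) hstar hτ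
  exact ⟨s, ρ, hs, hρ, hτeq.trans (Set.ext fun x => mem_add_fintype_sum σ ρ)⟩

/-- Let `Φ` be a complete fan and `σ` a cone of maximal dimension in
the singular subfan `Φˢ`. Then every cone `τ ∈ St(σ)` has the form
`τ = σ + ρ₁ + ... + ρ_s` with `s = dim τ - dim σ`, where each `ρᵢ` is a free edge
of `τ`. -/
theorem star_of_maximal_singular_cone [FiniteDimensional ℝ V]
    (Φ : Fan V) (hΦ : Φ.IsComplete) (σ : Set V)
    (hσ : σ ∈ Φ.singular) (hmax : ∀ τ ∈ Φ.singular, coneDim τ ≤ coneDim σ) :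
    ∀ τ ∈ Φ.star σ,
      ∃ (s : ℕ) (ρ : Fin s → Set V),
        s = coneDim τ - coneDim σ ∧
        (∀ i, IsFreeEdge (ρ i) τ) ∧
        τ = {x | ∃ a ∈ σ, ∃ c : Fin s → V, (∀ i, c i ∈ ρ i) ∧ x = a + ∑ i, c i} :=
  star_of_maximal_singular_cone_general Φ σ hσ hmax
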